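/- arXiv:1709.03836 — 2 statements merged into one kernel-verified Lean document; each statement's English description precedes it below -/
import Mathlib

section
/- The roots of a monic polynomial depend Hölder-continuously on its coefficients: for each degree k there exist constants such that if p(t) = t^k + a_{k-1}t^{k-1} + ⋯ + a₀ and q(t) = t^k + b_{k-1}t^{k-1} + ⋯ + b₀ are monic polynomials over ℂ with coefficients in a fixed bounded set, then for every root α of p there exists a root β of q with |α - β| ≤ C (max_i |a_i - b_i|)^{1/k}. -/
/-!
Every root of a monic polynomial whose lower coefficients are bounded by `M` has modulus less
than `M + 1` (Cauchy's bound). Hence at a root `α` of `p` the value `q(α) = q(α) - p(α) =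
∑ (b_i - a_i) α^i` has modulus at most `k (M + 1)^k ε`, where `ε = max |a_i - b_i|`. As `q` is
monic and splits, `q(α) = ∏ (α - β_j)` over its `k` roots, so the root `β` nearest to `α`
satisfies `|α - β|^k ≤ |q(α)|`; taking `k`-th roots gives `C = (k (M + 1)^k)^{1/k}`.
-/

open Polynomial

namespace Polynomial

section Ring

variable {R : Type*} [CommRing R] {k : ℕ}

noncomputable def monicOfCoeffs (a : Fin k → R) : R[X] :=
  X ^ k + ∑ i : Fin k, C (a i) * X ^ (i : ℕ)

theorem eval_monicOfCoeffs (a : Fin k → R) (z : R) :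
    (monicOfCoeffs a).eval z = z ^ k + ∑ i : Fin k, a i * z ^ (i : ℕ) := by
  simp [monicOfCoeffs, eval_finsetSum]

theorem monic_monicOfCoeffs (a : Fin k → R) : (monicOfCoeffs a).Monic :=
  monic_X_pow_add (degree_sum_fin_lt a)

theorem natDegree_monicOfCoeffs [Nontrivial R] (a : Fin k → R) :
    (monicOfCoeffs a).natDegree = k := by
  rw [monicOfCoeffs, natDegree_add_eq_left_of_degree_lt, natDegree_X_pow]
  simpa only [degree_X_pow] using degree_sum_fin_lt a

theorem coeff_monicOfCoeffs (a : Fin k → R) {i : ℕ} (hi : i < k) :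
    (monicOfCoeffs a).coeff i = a ⟨i, hi⟩ := by
  rw [monicOfCoeffs, coeff_add, coeff_X_pow, if_neg hi.ne, zero_add, finsetSum_coeff,
    Fintype.sum_eq_single ⟨i, hi⟩, coeff_C_mul_X_pow, if_pos rfl]
  intro j hj
  rw [coeff_C_mul_X_pow, if_neg fun h => hj (Fin.ext h.symm)]

theorem eval_monicOfCoeffs_sub (a b : Fin k → R) (z : R) :
    (monicOfCoeffs b).eval z - (monicOfCoeffs a).eval z =
      ∑ i : Fin k, (b i - a i) * z ^ (i : ℕ) := by
  simp only [eval_monicOfCoeffs, sub_mul, Finset.sum_sub_distrib]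
  ring

end Ring

variable {K : Type*} [NormedField K]

theorem norm_eval_monicOfCoeffs_sub_le {k : ℕ} {a b : Fin k → K} {ε : ℝ}
    (hab : ∀ i, ‖a i - b i‖ ≤ ε) {R : ℝ} (hR : 1 ≤ R) {z : K} (hz : ‖z‖ ≤ R) :
    ‖(monicOfCoeffs b).eval z - (monicOfCoeffs a).eval z‖ ≤ k * R ^ k * ε := by
  rw [eval_monicOfCoeffs_sub]
  calc ‖∑ i : Fin k, (b i - a i) * z ^ (i : ℕ)‖
      ≤ ∑ i : Fin k, ‖(b i - a i) * z ^ (i : ℕ)‖ := norm_sum_le _ _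
    _ ≤ ∑ _i : Fin k, ε * R ^ k := by
        refine Finset.sum_le_sum fun i _ => ?_
        rw [norm_mul, norm_pow, norm_sub_rev]
        have hzi : ‖z‖ ^ (i : ℕ) ≤ R ^ k :=
          (pow_le_pow_left₀ (norm_nonneg z) hz i).trans (pow_le_pow_right₀ hR i.isLt.le)
        exact mul_le_mul (hab i) hzi (by positivity) ((norm_nonneg _).trans (hab i))
    _ = k * R ^ k * ε := by
        rw [Finset.sum_const, Finset.card_univ, Fintype.card_fin, nsmul_eq_mul]
        ring

theorem IsRoot.norm_lt_add_one_of_monic {p : K[X]} {α : K} (hα : p.IsRoot α) (hp : p.Monic)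
    {M : ℝ} (hM : 0 ≤ M) (hcoeff : ∀ i < p.natDegree, ‖p.coeff i‖ ≤ M) :
    ‖α‖ < M + 1 := by
  have hbound : cauchyBound p ≤ ⟨M, hM⟩ + 1 := by
    rw [cauchyBound, hp.leadingCoeff, nnnorm_one, div_one]
    exact add_le_add_left (Finset.sup_le fun i hi =>
      show ‖p.coeff i‖₊ ≤ ⟨M, hM⟩ from hcoeff i (Finset.mem_range.mp hi)) 1
  exact_mod_cast (hα.norm_lt_cauchyBound hp.ne_zero).trans_le hbound

theorem Splits.exists_mem_roots_norm_sub_pow_le {p : K[X]} (hs : p.Splits) (hp : p.Monic)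
    (hdeg : 0 < p.natDegree) (z : K) :
    ∃ β ∈ p.roots, ‖z - β‖ ^ p.natDegree ≤ ‖p.eval z‖ := by
  have hcard : p.roots.card = p.natDegree := splits_iff_card_roots.mp hs
  obtain ⟨β, hβ, hmin⟩ := p.roots.exists_min_image (fun r => ‖z - r‖₊)
    (Multiset.card_pos.mp (hcard ▸ hdeg))
  refine ⟨β, hβ, ?_⟩
  suffices ‖z - β‖₊ ^ p.natDegree ≤ ‖p.eval z‖₊ by exact_mod_cast this
  calc ‖z - β‖₊ ^ p.natDegree = ‖z - β‖₊ ^ (p.roots.map fun r => ‖z - r‖₊).card := by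
        rw [Multiset.card_map, hcard]
    _ ≤ (p.roots.map fun r => ‖z - r‖₊).prod :=
        Multiset.pow_card_le_prod (Multiset.forall_mem_map_iff.mpr hmin)
    _ = ‖p.eval z‖₊ := by
        rw [hs.eval_eq_prod_roots_of_monic hp, ← nnnormHom_apply, map_multiset_prod,
          Multiset.map_map]
        rfl

end Polynomial

/-- Hölder dependence of roots of monic polynomials on their coefficients: for each degree
`k ≥ 1` and each bound `M` on the coefficients, there is a constant `C` such that for
monic polynomials `p(t) = t^k + ∑ a_i t^i`, `q(t) = t^k + ∑ b_i t^i` over `ℂ` with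
`|a_i|, |b_i| ≤ M`, every root `α` of `p` admits a root `β` of `q` with
`|α - β| ≤ C (max_i |a_i - b_i|)^{1/k}`. -/
theorem stmt_1 (k : ℕ) (hk : 1 ≤ k) (M : ℝ) (hM : 0 < M) :
    ∃ C > 0, ∀ a b : Fin k → ℂ,
      (∀ i, ‖a i‖ ≤ M) → (∀ i, ‖b i‖ ≤ M) →
      ∀ α : ℂ, α ^ k + ∑ i : Fin k, a i * α ^ (i : ℕ) = 0 →
      ∃ β : ℂ, β ^ k + ∑ i : Fin k, b i * β ^ (i : ℕ) = 0 ∧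
        ‖α - β‖ ≤ C * (⨆ i : Fin k, ‖a i - b i‖) ^ ((1 : ℝ) / k) := by
  set R : ℝ := M + 1
  refine ⟨((k : ℝ) * R ^ k) ^ ((1 : ℝ) / k), by positivity, fun a b ha _ α hα => ?_⟩
  set ε := ⨆ i : Fin k, ‖a i - b i‖
  have hε : ∀ i, ‖a i - b i‖ ≤ ε := fun i =>
    le_ciSup (f := fun i => ‖a i - b i‖) (Set.finite_range _).bddAbove i
  have hαR : ‖α‖ ≤ R := by
    have hroot : (monicOfCoeffs a).IsRoot α := by rwa [IsRoot, eval_monicOfCoeffs]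
    refine (hroot.norm_lt_add_one_of_monic (monic_monicOfCoeffs a) hM.le fun i hi => ?_).le
    rw [natDegree_monicOfCoeffs] at hi
    simpa only [coeff_monicOfCoeffs a hi] using ha ⟨i, hi⟩
  obtain ⟨β, hβ, hαβ⟩ := (IsAlgClosed.splits _).exists_mem_roots_norm_sub_pow_le
    (monic_monicOfCoeffs b) (by rw [natDegree_monicOfCoeffs]; omega) α
  refine ⟨β, by rw [← eval_monicOfCoeffs]; exact isRoot_of_mem_roots hβ, ?_⟩
  rw [natDegree_monicOfCoeffs] at hαβ
  have hpert := norm_eval_monicOfCoeffs_sub_le hε (by linarith : (1 : ℝ) ≤ R) hαR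
  rw [eval_monicOfCoeffs a, hα, sub_zero] at hpert
  calc ‖α - β‖ = (‖α - β‖ ^ k) ^ ((1 : ℝ) / k) := by
        rw [one_div, Real.pow_rpow_inv_natCast (norm_nonneg _) (by omega)]
    _ ≤ ((k : ℝ) * R ^ k * ε) ^ ((1 : ℝ) / k) :=
        Real.rpow_le_rpow (by positivity) (hαβ.trans hpert) (by positivity)
    _ = ((k : ℝ) * R ^ k) ^ ((1 : ℝ) / k) * ε ^ ((1 : ℝ) / k) :=
        Real.mul_rpow (by positivity) (Real.iSup_nonneg fun i => norm_nonneg _)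
end

section
/- Let Θ₁, Θ₂ ⊂ ℝ³ be two disjoint smooth compact strictly convex obstacles. There is no billiard ray (broken line reflecting off the obstacles by the law of reflection) that is tangent to Θ₁ ∪ Θ₂ at three or more distinct points. -/
open scoped RealInnerProductSpace

/-- A broken billiard ray outside the obstacle set `O`: the position `γ` is locally linear
on both sides of every time, moves with the right-velocity `ξ`, never enters the interior
of `O`, and at boundary points the velocity obeys the law of reflection
`ξ⁺ = ξ⁻ - 2⟨ξ⁻, n⟩ n`. -/
def IsBilliardRay {n : ℕ} (O : Set (EuclideanSpace ℝ (Fin n)))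
    (nv : EuclideanSpace ℝ (Fin n) → EuclideanSpace ℝ (Fin n))
    (γ ξ : ℝ → EuclideanSpace ℝ (Fin n)) : Prop :=
  (∀ t : ℝ, γ t ∉ interior O) ∧ (∀ t : ℝ, ξ t ≠ 0) ∧
  ∀ t : ℝ, ∃ v : EuclideanSpace ℝ (Fin n),
    (∀ᶠ s in nhdsWithin t (Set.Iic t), γ s = γ t + (s - t) • v) ∧
    (∀ᶠ s in nhdsWithin t (Set.Ici t), γ s = γ t + (s - t) • ξ t) ∧
    (γ t ∉ frontier O → ξ t = v) ∧
    (γ t ∈ frontier O → ξ t = v - (2 * ⟪v, nv (γ t)⟫) • nv (γ t))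

/-!
At a tangency point the law of reflection is trivial, so the ray runs along its tangent line
through that point. By strict convexity this line touches the obstacle it is tangent to only at
the tangency point, and it misses the other, disjoint, convex obstacle on at least one side. On
that side the ray never reflects again, so it never comes back to `Θ₁ ∪ Θ₂`: a tangency point is
the first or the last contact of the ray with the obstacles. The backward direction reduces to the
forward one because the law of reflection is an involution, so billiard rays can be reversed.
-/

open Set Filter Topology

section Reflection

variable {E : Type*} [NormedAddCommGroup E] [InnerProductSpace ℝ E] {v n : E}

lemma inner_reflect_of_norm_eq_one (hn : ‖n‖ = 1) :
    ⟪v - (2 * ⟪v, n⟫) • n, n⟫ = -⟪v, n⟫ := by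
  rw [inner_sub_left, real_inner_smul_left, real_inner_self_eq_norm_sq, hn]
  ring

lemma reflect_eq_self_of_inner_reflect_eq_zero (hn : ‖n‖ = 1)
    (h : ⟪v - (2 * ⟪v, n⟫) • n, n⟫ = 0) : v - (2 * ⟪v, n⟫) • n = v := by
  rw [inner_reflect_of_norm_eq_one hn, neg_eq_zero] at h
  simp [h]

end Reflection

lemma eq_and_eq_of_eventually_add_smul_eq {E : Type*} [AddCommGroup E] [Module ℝ E]
    {p q v w : E} {t : ℝ} (h : ∀ᶠ s in 𝓝[<] t, p + (s - t) • v = q + (s - t) • w) :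
    p = q ∧ v = w := by
  obtain ⟨a, ha, hat⟩ := (h.and self_mem_nhdsWithin).exists
  obtain ⟨b, hb, hab, -⟩ := (h.and (Ioo_mem_nhdsLT (show a < t from hat))).exists
  have hvw : v = w := by
    refine smul_right_injective E (sub_ne_zero.2 hab.ne') ?_
    linear_combination (norm := module) hb - ha
  refine ⟨?_, hvw⟩
  rw [hvw] at ha
  linear_combination (norm := module) ha

lemma eqOn_Ici_of_forall_eventuallyEq {α β : Type*} [ConditionallyCompleteLinearOrder α]
    [TopologicalSpace α] [OrderTopology α] [NoMaxOrder α] {f g : α → β} {a : α}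
    (h : ∀ t, a ≤ t → EqOn f g (Ico a t) → f =ᶠ[𝓝[≥] t] g) : EqOn f g (Ici a) := by
  intro r hr
  by_contra hne
  set S := {x | a ≤ x ∧ f x ≠ g x}
  have hS : S.Nonempty := ⟨r, hr, hne⟩
  have hbdd : BddBelow S := ⟨a, fun x hx => hx.1⟩
  have hbelow : EqOn f g (Ico a (sInf S)) := fun x hx =>
    by_contra fun hx' => hx.2.not_ge (csInf_le hbdd ⟨hx.1, hx'⟩)
  obtain ⟨b, hb, hIco⟩ :=
    mem_nhdsGE_iff_exists_Ico_subset.1 (h _ (le_csInf hS fun x hx => hx.1) hbelow)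
  obtain ⟨x, hxS, hxb⟩ := exists_lt_of_csInf_lt hS hb
  exact hxS.2 (hIco ⟨csInf_le hbdd hxS, hxb⟩)

section Convexity

variable {E : Type*} [NormedAddCommGroup E] [InnerProductSpace ℝ E] {Θ Θ' : Set E} {p n ξ : E}

lemma Convex.forall_pos_or_forall_neg_add_smul_notMem (hΘ : Convex ℝ Θ) (hp : p ∉ Θ) :
    (∀ s : ℝ, 0 < s → p + s • ξ ∉ Θ) ∨ (∀ s : ℝ, s < 0 → p + s • ξ ∉ Θ) := by
  have hline : Convex ℝ ((fun s : ℝ => p + s • ξ) ⁻¹' Θ) :=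
    (hΘ.translate_preimage_right p).is_linear_preimage (IsLinearMap.isLinearMap_smul' ξ)
  by_contra! h
  obtain ⟨⟨a, ha, haΘ⟩, ⟨b, hb, hbΘ⟩⟩ := h
  have h0 : (0 : ℝ) ∈ Icc b a := ⟨hb.le, ha.le⟩
  exact hp (by simpa using hline.ordConnected.out hbΘ haΘ h0)

lemma StrictConvex.add_smul_notMem_of_inner_eq_zero (hΘ : StrictConvex ℝ Θ) (hp : p ∈ Θ)
    (hn : n ≠ 0) (hsupp : ∀ z ∈ Θ, ⟪n, z - p⟫ ≤ 0) (hperp : ⟪ξ, n⟫ = 0) (hξ : ξ ≠ 0)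
    {s : ℝ} (hs : s ≠ 0) : p + s • ξ ∉ Θ := by
  intro hq
  have hpq : p ≠ p + s • ξ := by simpa [eq_comm (a := p)] using And.intro hs hξ
  have hmid : p + (s / 2) • ξ ∈ interior Θ := by
    convert hΘ hp hq hpq (by norm_num : (0 : ℝ) < 1 / 2) (by norm_num : (0 : ℝ) < 1 / 2)
      (by norm_num) using 1
    module
  -- an interior point cannot maximise the nonzero linear functional `⟪n, ·⟫` over `Θ`
  have hmax : IsLocalMax (fun z => ⟪n, z⟫) (p + (s / 2) • ξ) := by
    filter_upwards [mem_interior_iff_mem_nhds.1 hmid] with z hz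
    have := hsupp z hz
    rw [inner_sub_right] at this
    rw [inner_add_right, real_inner_smul_right, real_inner_comm ξ n, hperp]
    linarith
  have h0 := hmax.fderiv_eq_zero
  rw [show (fun z => ⟪n, z⟫) = innerSL ℝ n from rfl, (innerSL ℝ n).fderiv] at h0
  exact hn (by simpa using congrArg (· n) h0)

lemma StrictConvex.forall_pos_or_forall_neg_add_smul_notMem_union (hΘ : StrictConvex ℝ Θ)
    (hΘ' : Convex ℝ Θ') (hdisj : Disjoint Θ Θ') (hp : p ∈ Θ) (hn : n ≠ 0)
    (hsupp : ∀ z ∈ Θ, ⟪n, z - p⟫ ≤ 0) (hperp : ⟪ξ, n⟫ = 0) (hξ : ξ ≠ 0) :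
    (∀ s : ℝ, 0 < s → p + s • ξ ∉ Θ ∪ Θ') ∨ (∀ s : ℝ, s < 0 → p + s • ξ ∉ Θ ∪ Θ') := by
  have hline {s : ℝ} := hΘ.add_smul_notMem_of_inner_eq_zero hp hn hsupp hperp hξ (s := s)
  exact (hΘ'.forall_pos_or_forall_neg_add_smul_notMem (hdisj.notMem_of_mem_left hp)).imp
    (fun h s hs hm => hm.elim (hline hs.ne') (h s hs))
    (fun h s hs hm => hm.elim (hline hs.ne) (h s hs))

end Convexity

namespace IsBilliardRay

variable {N : ℕ} {O : Set (EuclideanSpace ℝ (Fin N))}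
  {nv : EuclideanSpace ℝ (Fin N) → EuclideanSpace ℝ (Fin N)}
  {γ ξ : ℝ → EuclideanSpace ℝ (Fin N)} {t₀ t : ℝ}

lemma eqOn_of_forall_pos_notMem (hγ : IsBilliardRay O nv γ ξ) (hO : IsClosed O)
    (hmiss : ∀ s : ℝ, 0 < s → γ t₀ + s • ξ t₀ ∉ O) :
    EqOn γ (fun t => γ t₀ + (t - t₀) • ξ t₀) (Ici t₀) := by
  refine eqOn_Ici_of_forall_eventuallyEq fun t ht hline => ?_
  obtain ⟨v, hl, hr, hnf, -⟩ := hγ.2.2 t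
  rcases ht.eq_or_lt with rfl | ht
  · exact hr
  have hγt : γ t = γ t₀ + (t - t₀) • ξ t₀ ∧ v = ξ t₀ := by
    refine eq_and_eq_of_eventually_add_smul_eq (t := t) ?_
    filter_upwards [nhdsWithin_mono t Iio_subset_Iic_self hl, Ioo_mem_nhdsLT ht] with s hs hst
    rw [← hs, hline ⟨hst.1.le, hst.2⟩]
    module
  have hfr : γ t ∉ frontier O := fun hfr =>
    hmiss (t - t₀) (sub_pos.2 ht) (hγt.1 ▸ hO.frontier_subset hfr)
  filter_upwards [hr] with s hs
  rw [hs, hγt.1, hnf hfr, hγt.2]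
  module

lemma notMem_of_lt_of_forall_pos_notMem (hγ : IsBilliardRay O nv γ ξ) (hO : IsClosed O)
    (hmiss : ∀ s : ℝ, 0 < s → γ t₀ + s • ξ t₀ ∉ O) (ht : t₀ < t) : γ t ∉ O := by
  rw [hγ.eqOn_of_forall_pos_notMem hO hmiss ht.le]
  exact hmiss _ (sub_pos.2 ht)

lemma reverse (hγ : IsBilliardRay O nv γ ξ) (hnv : ∀ y ∈ frontier O, ‖nv y‖ = 1) :
    ∃ ξ' : ℝ → EuclideanSpace ℝ (Fin N), IsBilliardRay O nv (fun t => γ (-t)) ξ' ∧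
      ∀ t, ⟪ξ t, nv (γ t)⟫ = 0 → ξ' (-t) = -ξ t := by
  obtain ⟨hout, hne, hloc⟩ := hγ
  choose v hl hr hnf hf using hloc
  have hneg (t : ℝ) : Tendsto Neg.neg (𝓝[≤] t) (𝓝[≥] (-t)) :=
    continuous_neg.continuousWithinAt.tendsto_nhdsWithin fun _ hs => neg_le_neg (α := ℝ) hs
  have hneg' (t : ℝ) : Tendsto Neg.neg (𝓝[≥] t) (𝓝[≤] (-t)) :=
    continuous_neg.continuousWithinAt.tendsto_nhdsWithin fun _ hs => neg_le_neg (α := ℝ) hs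
  refine ⟨fun t => -v (-t),
    ⟨fun t => hout (-t), fun t => ?_, fun t => ⟨-ξ (-t), ?_, ?_, ?_, ?_⟩⟩, fun t htan => ?_⟩
  · refine neg_ne_zero.2 fun h0 => hne (-t) ?_
    by_cases hfr : γ (-t) ∈ frontier O
    · simp [hf _ hfr, h0]
    · rw [hnf _ hfr, h0]
  · filter_upwards [(hneg t).eventually (hr (-t))] with s hs
    rw [hs]
    module
  · filter_upwards [(hneg' t).eventually (hl (-t))] with s hs
    rw [hs]
    module
  · intro hfr
    rw [hnf _ hfr]
  · intro hfr
    rw [hf _ hfr, inner_neg_left, inner_reflect_of_norm_eq_one (hnv _ hfr)]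
    module
  · simp only [neg_neg, neg_inj]
    by_cases hfr : γ t ∈ frontier O
    · rw [hf _ hfr] at htan ⊢
      exact (reflect_eq_self_of_inner_reflect_eq_zero (hnv _ hfr) htan).symm
    · exact (hnf _ hfr).symm

lemma notMem_of_gt_of_forall_neg_notMem (hγ : IsBilliardRay O nv γ ξ) (hO : IsClosed O)
    (hnv : ∀ y ∈ frontier O, ‖nv y‖ = 1) (htan : ⟪ξ t₀, nv (γ t₀)⟫ = 0)
    (hmiss : ∀ s : ℝ, s < 0 → γ t₀ + s • ξ t₀ ∉ O) (ht : t < t₀) : γ t ∉ O := by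
  obtain ⟨ξ', hγ', hξ'⟩ := hγ.reverse hnv
  have hmiss' : ∀ s : ℝ, 0 < s → γ (-(-t₀)) + s • ξ' (-t₀) ∉ O := fun s hs => by
    simpa [hξ' t₀ htan] using hmiss (-s) (neg_neg_of_pos hs)
  simpa using hγ'.notMem_of_lt_of_forall_pos_notMem hO hmiss' (neg_lt_neg ht)

end IsBilliardRay

/-- Outside two disjoint smooth compact strictly convex obstacles in ℝ³ (with `nv` the
outward unit normal field of each obstacle), no billiard ray is tangent to `Θ₁ ∪ Θ₂`
at three or more distinct points. -/
theorem stmt_5 (Θ₁ Θ₂ : Set (EuclideanSpace ℝ (Fin 3)))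
    (h₁c : IsCompact Θ₁) (h₂c : IsCompact Θ₂)
    (h₁conv : StrictConvex ℝ Θ₁) (h₂conv : StrictConvex ℝ Θ₂)
    (hdisj : Disjoint Θ₁ Θ₂)
    (nv : EuclideanSpace ℝ (Fin 3) → EuclideanSpace ℝ (Fin 3))
    (hnv₁ : ∀ y ∈ frontier Θ₁, ‖nv y‖ = 1 ∧ ∀ z ∈ Θ₁, ⟪nv y, z - y⟫ ≤ 0)
    (hnv₂ : ∀ y ∈ frontier Θ₂, ‖nv y‖ = 1 ∧ ∀ z ∈ Θ₂, ⟪nv y, z - y⟫ ≤ 0)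
    (γ ξ : ℝ → EuclideanSpace ℝ (Fin 3))
    (hγ : IsBilliardRay (Θ₁ ∪ Θ₂) nv γ ξ) :
    ¬ ∃ t₁ t₂ t₃ : ℝ, t₁ < t₂ ∧ t₂ < t₃ ∧
      γ t₁ ≠ γ t₂ ∧ γ t₂ ≠ γ t₃ ∧ γ t₁ ≠ γ t₃ ∧
      (∀ t ∈ ({t₁, t₂, t₃} : Set ℝ),
        γ t ∈ frontier (Θ₁ ∪ Θ₂) ∧ ⟪ξ t, nv (γ t)⟫ = 0) := by
  rintro ⟨t₁, t₂, t₃, h₁₂, h₂₃, -, -, -, htan⟩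
  have hO : IsClosed (Θ₁ ∪ Θ₂) := h₁c.isClosed.union h₂c.isClosed
  have hnv : ∀ y ∈ frontier (Θ₁ ∪ Θ₂), ‖nv y‖ = 1 := fun y hy =>
    (frontier_union_subset Θ₁ Θ₂ hy).elim (fun h => (hnv₁ y h.1).1) (fun h => (hnv₂ y h.2).1)
  obtain ⟨hfr, hperp⟩ := htan t₂ (by simp)
  have hn : nv (γ t₂) ≠ 0 := ne_zero_of_norm_ne_zero (by simp [hnv _ hfr])
  have hside : (∀ s : ℝ, 0 < s → γ t₂ + s • ξ t₂ ∉ Θ₁ ∪ Θ₂) ∨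
      (∀ s : ℝ, s < 0 → γ t₂ + s • ξ t₂ ∉ Θ₁ ∪ Θ₂) := by
    rcases frontier_union_subset Θ₁ Θ₂ hfr with ⟨h, -⟩ | ⟨-, h⟩
    · exact h₁conv.forall_pos_or_forall_neg_add_smul_notMem_union h₂conv.convex hdisj
        (h₁c.isClosed.frontier_subset h) hn (hnv₁ _ h).2 hperp (hγ.2.1 t₂)
    · rw [union_comm]
      exact h₂conv.forall_pos_or_forall_neg_add_smul_notMem_union h₁conv.convex hdisj.symm
        (h₂c.isClosed.frontier_subset h) hn (hnv₂ _ h).2 hperp (hγ.2.1 t₂)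
  rcases hside with hfwd | hbwd
  · exact hγ.notMem_of_lt_of_forall_pos_notMem hO hfwd h₂₃
      (hO.frontier_subset (htan t₃ (by simp)).1)
  · exact hγ.notMem_of_gt_of_forall_neg_notMem hO hnv hperp hbwd h₁₂
      (hO.frontier_subset (htan t₁ (by simp)).1)
end
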